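/- arXiv:1802.06372 — 10 statements merged into one kernel-verified Lean document; each statement's English description precedes it below -/
import Mathlib

section
/- For every z ∈ ℝ, the map t ↦ Φ_t(z) is the phase flow of the ordinary differential equation x'(t) = F(x(t)) = x(t) − x(t)³: one has Φ_0(z) = z and, for every t ≥ 0, the function t ↦ Φ_t(z) is differentiable at t (one-sided at t = 0) with derivative equal to Φ_t(z) − Φ_t(z)³. -/
noncomputable def F (z : ℝ) : ℝ := z - z ^ 3

noncomputable def Phi (t z : ℝ) : ℝ :=
  z / Real.sqrt (z ^ 2 + (1 - z ^ 2) * Real.exp (-2 * t))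

/-!
Write `Φ_t(z) = z · D(t)^{-1/2}` with `D(t) = z² + (1 - z²) e^{-2t}`. Then `D' = 2z² - 2D`, so
`Φ' = -z D'/(2 D^{3/2}) = z (D - z²)/D^{3/2} = Φ - Φ³`. For `t ≥ 0` we have `e^{-2t} ≤ 1`, and
`D(t) = e^{-2t} + z² (1 - e^{-2t}) > 0` keeps everything differentiable.
-/

open Real

lemma flowDenom_pos (z : ℝ) {t : ℝ} (ht : 0 ≤ t) :
    0 < z ^ 2 + (1 - z ^ 2) * exp (-2 * t) := by
  have hexp_le : exp (-2 * t) ≤ 1 := exp_le_one_iff.mpr (by linarith)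
  nlinarith [exp_pos (-2 * t), sq_nonneg z]

lemma hasDerivAt_flowDenom (z t : ℝ) :
    HasDerivAt (fun s => z ^ 2 + (1 - z ^ 2) * exp (-2 * s))
      (2 * z ^ 2 - 2 * (z ^ 2 + (1 - z ^ 2) * exp (-2 * t))) t := by
  have hexp : HasDerivAt (fun s => exp (-2 * s)) (exp (-2 * t) * -2) t := by
    simpa using ((hasDerivAt_id t).const_mul (-2)).exp
  exact ((hexp.const_mul (1 - z ^ 2)).const_add (z ^ 2)).congr_deriv (by ring)

lemma HasDerivAt.hasDerivAt_div_sqrt_F {D : ℝ → ℝ} {z t : ℝ}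
    (hD : HasDerivAt D (2 * z ^ 2 - 2 * D t) t) (hpos : 0 < D t) :
    HasDerivAt (fun s => z / √(D s)) (F (z / √(D t))) t := by
  have hsqrt_pos : 0 < √(D t) := sqrt_pos.mpr hpos
  refine ((hasDerivAt_const t z).div (hD.sqrt hpos.ne') hsqrt_pos.ne').congr_deriv ?_
  have hsq : √(D t) ^ 2 = D t := sq_sqrt hpos.le
  unfold F
  field_simp
  linear_combination (-z) * hsq

/-- For every `z`, `t ↦ Φ_t(z)` is the phase flow of `x' = F(x) = x - x³`:
`Φ_0(z) = z` and for every `t ≥ 0` it is differentiable at `t` (one-sided at `t = 0`)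
with derivative `Φ_t(z) - Φ_t(z)³`. -/
theorem phi_is_flow_of_F (z : ℝ) :
    Phi 0 z = z ∧
      ∀ t : ℝ, 0 ≤ t →
        HasDerivWithinAt (fun s => Phi s z) (F (Phi t z)) (Set.Ici 0) t := by
  refine ⟨by simp [Phi], fun t ht => ?_⟩
  exact ((hasDerivAt_flowDenom z t).hasDerivAt_div_sqrt_F (flowDenom_pos z ht)).hasDerivWithinAt
end

section
/- (Lipschitz continuity of the splitting flow map, Lemma 2.1, first estimate.) For every δt₀ ∈ (0,1) there exists a constant C ∈ (0,∞) such that for every δt ∈ [0, δt₀] and all z₁, z₂ ∈ ℝ, |Φ_{δt}(z₁) − Φ_{δt}(z₂)| ≤ exp(C·δt₀)·|z₁ − z₂|. -/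
open Real

section
variable {a : ℝ}

lemma le_sq_add_one_sub_sq_mul (ha : a ≤ 1) (z : ℝ) : a ≤ z ^ 2 + (1 - z ^ 2) * a := by
  nlinarith [sq_nonneg z]

lemma hasDerivAt_div_sqrt_sq_add_one_sub_sq_mul (ha₀ : 0 < a) (ha₁ : a ≤ 1) (z : ℝ) :
    HasDerivAt (fun w => w / √(w ^ 2 + (1 - w ^ 2) * a))
      (a / √(z ^ 2 + (1 - z ^ 2) * a) ^ 3) z := by
  set q := z ^ 2 + (1 - z ^ 2) * a
  have hq : 0 < q := ha₀.trans_le (le_sq_add_one_sub_sq_mul ha₁ z)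
  have hq' : HasDerivAt (fun w => w ^ 2 + (1 - w ^ 2) * a) (2 * (1 - a) * z) z := by
    refine ((hasDerivAt_pow 2 z).add ((hasDerivAt_pow 2 z).const_sub 1 |>.mul_const a))
      |>.congr_deriv ?_
    push_cast; ring
  have hsqrt_q : √q ^ 2 = q := sq_sqrt hq.le
  have hsqrt_pos : 0 < √q := sqrt_pos.2 hq
  refine ((hasDerivAt_id z).div (hq'.sqrt hq.ne') hsqrt_pos.ne').congr_deriv ?_
  change (1 * √q - z * (2 * (1 - a) * z / (2 * √q))) / √q ^ 2 = _
  field_simp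
  rw [hsqrt_q]
  ring

lemma div_sqrt_pow_three_le (ha₀ : 0 < a) (ha₁ : a ≤ 1) (z : ℝ) :
    a / √(z ^ 2 + (1 - z ^ 2) * a) ^ 3 ≤ (√a)⁻¹ := by
  have hs : √a ≤ √(z ^ 2 + (1 - z ^ 2) * a) := sqrt_le_sqrt (le_sq_add_one_sub_sq_mul ha₁ z)
  have hsa : 0 < √a := sqrt_pos.2 ha₀
  calc a / √(z ^ 2 + (1 - z ^ 2) * a) ^ 3 ≤ a / √a ^ 3 := by gcongr
    _ = (√a)⁻¹ := by
      nth_rewrite 1 [← sq_sqrt ha₀.le]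
      field_simp

lemma abs_div_sqrt_sub_le (ha₀ : 0 < a) (ha₁ : a ≤ 1) (z₁ z₂ : ℝ) :
    |z₁ / √(z₁ ^ 2 + (1 - z₁ ^ 2) * a) - z₂ / √(z₂ ^ 2 + (1 - z₂ ^ 2) * a)|
      ≤ (√a)⁻¹ * |z₁ - z₂| :=
  convex_univ.norm_image_sub_le_of_norm_hasDerivWithin_le
    (fun z _ => (hasDerivAt_div_sqrt_sq_add_one_sub_sq_mul ha₀ ha₁ z).hasDerivWithinAt)
    (fun z _ => by
      rw [Real.norm_eq_abs, abs_of_nonneg (by positivity)]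
      exact div_sqrt_pow_three_le ha₀ ha₁ z)
    (Set.mem_univ z₂) (Set.mem_univ z₁)

end

lemma abs_Phi_sub_le {t : ℝ} (ht : 0 ≤ t) (z₁ z₂ : ℝ) :
    |Phi t z₁ - Phi t z₂| ≤ exp t * |z₁ - z₂| := by
  have hinv_sqrt : (√(exp (-2 * t)))⁻¹ = exp t := by
    rw [← exp_half, ← exp_neg]
    ring_nf
  rw [← hinv_sqrt]
  exact abs_div_sqrt_sub_le (exp_pos _) (exp_le_one_iff.2 (by linarith)) z₁ z₂

theorem phi_lipschitz_general (δt₀ : ℝ) :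
    ∃ C : ℝ, 0 < C ∧ ∀ δt ∈ Set.Icc (0 : ℝ) δt₀, ∀ z₁ z₂ : ℝ,
      |Phi δt z₁ - Phi δt z₂| ≤ Real.exp (C * δt₀) * |z₁ - z₂| := by
  refine ⟨1, one_pos, fun δt ⟨hδt₀, hδt⟩ z₁ z₂ => ?_⟩
  calc |Phi δt z₁ - Phi δt z₂| ≤ exp δt * |z₁ - z₂| := abs_Phi_sub_le hδt₀ z₁ z₂
    _ ≤ exp (1 * δt₀) * |z₁ - z₂| := by gcongr; linarith

/-- Lipschitz continuity of the splitting flow map (Lemma 2.1, first estimate):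
for every `δt₀ ∈ (0,1)` there is `C ∈ (0,∞)` such that for every `δt ∈ [0, δt₀]`
and all `z₁, z₂ ∈ ℝ`, `|Φ_{δt}(z₁) - Φ_{δt}(z₂)| ≤ exp(C δt₀) |z₁ - z₂|`. -/
theorem phi_lipschitz (δt₀ : ℝ) (h₀ : δt₀ ∈ Set.Ioo (0 : ℝ) 1) :
    ∃ C : ℝ, 0 < C ∧ ∀ δt ∈ Set.Icc (0 : ℝ) δt₀, ∀ z₁ z₂ : ℝ,
      |Phi δt z₁ - Phi δt z₂| ≤ Real.exp (C * δt₀) * |z₁ - z₂| :=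
  phi_lipschitz_general δt₀
end

section
/- (Consistency of the modified nonlinearity, Lemma 2.1, fourth estimate.) For every δt₀ ∈ (0,1) there exists a constant C(δt₀) ∈ (0,∞) such that for every δt ∈ [0, δt₀] and all z ∈ ℝ, |Ψ_{δt}(z) − F(z)| ≤ C(δt₀)·δt·(1 + |z|⁵). -/
/-- The modified nonlinearity `Ψ_{δt}(z) = (Φ_{δt}(z) - z)/δt` for `δt > 0`, `Ψ_0 = F`. -/
noncomputable def Psi (δt z : ℝ) : ℝ :=
  if δt = 0 then F z else (Phi δt z - z) / δt

open Real

lemma abs_exp_neg_sub_one_add_le {x : ℝ} (hx : 0 ≤ x) : |exp (-x) - 1 + x| ≤ x ^ 2 := by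
  have hlow : 1 - x ≤ exp (-x) := by linarith [add_one_le_exp (-x)]
  have hup : exp (-x) * (1 + x) ≤ 1 := by
    calc exp (-x) * (1 + x) ≤ exp (-x) * exp x := by
          gcongr; linarith [add_one_le_exp x]
      _ = 1 := by rw [← exp_add, neg_add_cancel, exp_zero]
  rw [abs_le]
  constructor <;> nlinarith [exp_pos (-x)]

lemma abs_one_sub_sq_le (z : ℝ) : |1 - z ^ 2| ≤ 1 + z ^ 2 :=
  abs_le.mpr ⟨by nlinarith [sq_nonneg z], by nlinarith⟩

lemma abs_mul_one_add_sq_sq_le (z : ℝ) : |z| * (1 + z ^ 2) ^ 2 ≤ 4 * (1 + |z| ^ 5) := by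
  rw [← sq_abs z]
  have ha := abs_nonneg z
  rcases le_total |z| 1 with h | h
  · have h1 : |z| ^ 3 ≤ 1 := pow_le_one₀ ha h
    nlinarith [pow_nonneg ha 5]
  · have h3 : |z| ^ 3 ≤ |z| ^ 5 := pow_le_pow_right₀ h (by norm_num)
    have h1 : |z| ≤ |z| ^ 5 := le_self_pow₀ h (by norm_num)
    nlinarith

noncomputable def phiDenom (t z : ℝ) : ℝ := √(z ^ 2 + (1 - z ^ 2) * exp (-2 * t))

section
variable {t : ℝ} (z : ℝ)

lemma one_sub_sq_phiDenom (ht : 0 ≤ t) :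
    1 - phiDenom t z ^ 2 = (1 - z ^ 2) * (1 - exp (-2 * t)) := by
  have hu : exp (-2 * t) ≤ 1 := exp_le_one_iff.mpr (by linarith)
  rw [phiDenom, sq_sqrt (by nlinarith [exp_pos (-2 * t), sq_nonneg z])]
  ring

lemma exp_neg_le_phiDenom (ht : 0 ≤ t) : exp (-t) ≤ phiDenom t z := by
  have hu : exp (-2 * t) ≤ 1 := exp_le_one_iff.mpr (by linarith)
  have hsq : exp (-t) = √(exp (-2 * t)) := by
    rw [← sqrt_sq (exp_pos (-t)).le, ← exp_nat_mul]; ring_nf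
  rw [hsq, phiDenom]
  exact sqrt_le_sqrt (by nlinarith [sq_nonneg z])

lemma abs_one_sub_sq_phiDenom_le (ht : 0 ≤ t) :
    |1 - phiDenom t z ^ 2| ≤ 2 * t * (1 + z ^ 2) := by
  have hu1 : exp (-2 * t) ≤ 1 := exp_le_one_iff.mpr (by linarith)
  have hu2 : 1 - 2 * t ≤ exp (-2 * t) := by linarith [add_one_le_exp (-2 * t)]
  have hz := abs_one_sub_sq_le z
  rw [one_sub_sq_phiDenom z ht, abs_mul, abs_of_nonneg (sub_nonneg.mpr hu1)]
  nlinarith [abs_nonneg (1 - z ^ 2)]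

lemma abs_one_sub_phiDenom_le (ht : 0 ≤ t) : |1 - phiDenom t z| ≤ 2 * t * (1 + z ^ 2) := by
  have hs : 0 ≤ phiDenom t z := sqrt_nonneg _
  calc |1 - phiDenom t z| ≤ |1 - phiDenom t z| * (1 + phiDenom t z) :=
        le_mul_of_one_le_right (abs_nonneg _) (by linarith)
    _ = |1 - phiDenom t z ^ 2| := by
        rw [← abs_of_nonneg (by linarith : 0 ≤ 1 + phiDenom t z), ← abs_mul]; ring_nf
    _ ≤ 2 * t * (1 + z ^ 2) := abs_one_sub_sq_phiDenom_le z ht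

lemma Phi_sub_sub_mul_F_eq (ht : 0 ≤ t) :
    Phi t z - z - t * F z = z * (1 - z ^ 2) *
      (1 - exp (-2 * t) - t * (phiDenom t z * (1 + phiDenom t z))) /
      (phiDenom t z * (1 + phiDenom t z)) := by
  have hs : 0 < phiDenom t z := (exp_pos _).trans_le (exp_neg_le_phiDenom z ht)
  have hsq := one_sub_sq_phiDenom z ht
  rw [Phi, ← phiDenom, F]
  generalize exp (-2 * t) = u at hsq ⊢
  field_simp
  linear_combination z * hsq

lemma abs_one_sub_exp_sub_mul_phiDenom_le (ht : 0 ≤ t) :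
    |1 - exp (-2 * t) - t * (phiDenom t z * (1 + phiDenom t z))| ≤ 8 * t ^ 2 * (1 + z ^ 2) := by
  have hexp : |exp (-(2 * t)) - 1 + 2 * t| ≤ (2 * t) ^ 2 :=
    abs_exp_neg_sub_one_add_le (by linarith)
  have h1 := abs_one_sub_phiDenom_le z ht
  have h2 := abs_one_sub_sq_phiDenom_le z ht
  calc |1 - exp (-2 * t) - t * (phiDenom t z * (1 + phiDenom t z))|
      = |-(exp (-(2 * t)) - 1 + 2 * t) + t * (1 - phiDenom t z) + t * (1 - phiDenom t z ^ 2)| := by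
        ring_nf
    _ ≤ |-(exp (-(2 * t)) - 1 + 2 * t)| + |t * (1 - phiDenom t z)| +
          |t * (1 - phiDenom t z ^ 2)| :=
        (abs_add_le _ _).trans (add_le_add_left (abs_add_le _ _) _)
    _ = |exp (-(2 * t)) - 1 + 2 * t| + t * |1 - phiDenom t z| + t * |1 - phiDenom t z ^ 2| := by
        rw [abs_neg, abs_mul, abs_mul, abs_of_nonneg ht]
    _ ≤ (2 * t) ^ 2 + t * (2 * t * (1 + z ^ 2)) + t * (2 * t * (1 + z ^ 2)) := by gcongr
    _ ≤ 8 * t ^ 2 * (1 + z ^ 2) := by nlinarith [sq_nonneg z, sq_nonneg t]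

lemma abs_Phi_sub_sub_mul_F_le (ht : 0 ≤ t) :
    |Phi t z - z - t * F z| ≤ 32 * exp t * t ^ 2 * (1 + |z| ^ 5) := by
  set s := phiDenom t z
  have hs : exp (-t) ≤ s := exp_neg_le_phiDenom z ht
  have hden : exp (-t) ≤ s * (1 + s) := by nlinarith [exp_pos (-t)]
  have hnum : |z * (1 - z ^ 2) * (1 - exp (-2 * t) - t * (s * (1 + s)))| ≤
      32 * t ^ 2 * (1 + |z| ^ 5) :=
    calc |z * (1 - z ^ 2) * (1 - exp (-2 * t) - t * (s * (1 + s)))|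
        = |z| * |1 - z ^ 2| * |1 - exp (-2 * t) - t * (s * (1 + s))| := by
          rw [abs_mul, abs_mul]
      _ ≤ |z| * (1 + z ^ 2) * (8 * t ^ 2 * (1 + z ^ 2)) := by
          gcongr
          · exact abs_one_sub_sq_le z
          · exact abs_one_sub_exp_sub_mul_phiDenom_le z ht
      _ = 8 * t ^ 2 * (|z| * (1 + z ^ 2) ^ 2) := by ring
      _ ≤ 8 * t ^ 2 * (4 * (1 + |z| ^ 5)) := by gcongr 1; exact abs_mul_one_add_sq_sq_le z
      _ = 32 * t ^ 2 * (1 + |z| ^ 5) := by ring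
  calc |Phi t z - z - t * F z|
      = |z * (1 - z ^ 2) * (1 - exp (-2 * t) - t * (s * (1 + s)))| / (s * (1 + s)) := by
        rw [Phi_sub_sub_mul_F_eq z ht, abs_div, abs_of_pos ((exp_pos _).trans_le hden)]
    _ ≤ |z * (1 - z ^ 2) * (1 - exp (-2 * t) - t * (s * (1 + s)))| / exp (-t) := by
        gcongr
    _ ≤ 32 * t ^ 2 * (1 + |z| ^ 5) / exp (-t) := by gcongr
    _ = 32 * exp t * t ^ 2 * (1 + |z| ^ 5) := by rw [exp_neg, div_inv_eq_mul]; ring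

lemma abs_Psi_sub_F_le (ht : 0 ≤ t) : |Psi t z - F z| ≤ 32 * exp t * t * (1 + |z| ^ 5) := by
  rcases ht.eq_or_lt with rfl | ht
  · simp [Psi]
  · have hsub : Psi t z - F z = (Phi t z - z - t * F z) / t := by
      rw [Psi, if_neg ht.ne']
      field_simp
    rw [hsub, abs_div, abs_of_pos ht, div_le_iff₀ ht]
    calc |Phi t z - z - t * F z| ≤ 32 * exp t * t ^ 2 * (1 + |z| ^ 5) :=
          abs_Phi_sub_sub_mul_F_le z ht.le
      _ = 32 * exp t * t * (1 + |z| ^ 5) * t := by ring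

end

theorem psi_consistency_general (δt₀ : ℝ) :
    ∃ C : ℝ, 0 < C ∧ ∀ δt ∈ Set.Icc (0 : ℝ) δt₀, ∀ z : ℝ,
      |Psi δt z - F z| ≤ C * δt * (1 + |z| ^ 5) := by
  refine ⟨32 * exp δt₀, by positivity, fun δt ⟨hδt, hδt₀⟩ z => ?_⟩
  calc |Psi δt z - F z| ≤ 32 * exp δt * δt * (1 + |z| ^ 5) := abs_Psi_sub_F_le z hδt
    _ ≤ 32 * exp δt₀ * δt * (1 + |z| ^ 5) := by gcongr

/-- Consistency of the modified nonlinearity (Lemma 2.1, fourth estimate): for every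
`δt₀ ∈ (0,1)` there is `C(δt₀) ∈ (0,∞)` such that for every `δt ∈ [0, δt₀]` and all
`z ∈ ℝ`, `|Ψ_{δt}(z) - F(z)| ≤ C(δt₀) δt (1 + |z|⁵)`. -/
theorem psi_consistency (δt₀ : ℝ) (h₀ : δt₀ ∈ Set.Ioo (0 : ℝ) 1) :
    ∃ C : ℝ, 0 < C ∧ ∀ δt ∈ Set.Icc (0 : ℝ) δt₀, ∀ z : ℝ,
      |Psi δt z - F z| ≤ C * δt * (1 + |z| ^ 5) :=
  psi_consistency_general δt₀
end

section
/- (Uniform cubic growth of the modified nonlinearity.) There exists a constant C ∈ (0,∞) such that for every δt ≥ 0 and every z ∈ ℝ, |Ψ_{δt}(z)| ≤ C·(1 + |z|³). -/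
open Real

lemma div_sqrt_sub_self {D : ℝ} (hD : 0 < D) (z : ℝ) :
    z / √D - z = z * (1 - D) / (√D * (1 + √D)) := by
  have hfactor : 1 - D = (1 - √D) * (1 + √D) := by
    ring_nf
    rw [sq_sqrt hD.le]
  rw [hfactor]
  field_simp

lemma one_sub_exp_neg_two_mul_le (t : ℝ) : 1 - exp (-2 * t) ≤ 2 * t := by
  rw [neg_mul]
  linarith [one_sub_le_exp_neg (2 * t)]

lemma min_one_abs_le_sqrt {u : ℝ} (hu₀ : 0 ≤ u) (hu₁ : u ≤ 1) (z : ℝ) :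
    min 1 |z| ≤ √(z ^ 2 + (1 - z ^ 2) * u) := by
  have hmin_sq : min 1 |z| ^ 2 ≤ min 1 (z ^ 2) := by
    rcases le_total 1 |z| with h | h
    · simp [min_eq_left h, min_eq_left (one_le_sq_iff_one_le_abs z |>.mpr h)]
    · simp [min_eq_right h, min_eq_right (sq_le_one_iff_abs_le_one z |>.mpr h)]
  have hconvex : min 1 (z ^ 2) ≤ z ^ 2 + (1 - z ^ 2) * u := by
    have : z ^ 2 + (1 - z ^ 2) * u = u * 1 + (1 - u) * z ^ 2 := by ring
    rw [this]
    nlinarith [min_le_left 1 (z ^ 2), min_le_right 1 (z ^ 2)]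
  exact (le_sqrt (le_min zero_le_one (abs_nonneg z))
    ((le_min zero_le_one (sq_nonneg z)).trans hconvex)).mpr (hmin_sq.trans hconvex)

lemma abs_mul_abs_one_sub_sq_le (z : ℝ) :
    |z| * |1 - z ^ 2| ≤ min 1 |z| * (1 + |z| ^ 3) := by
  rw [← sq_abs z]
  rcases le_total 1 |z| with h | h
  · rw [min_eq_left h, abs_of_nonpos (show 1 - |z| ^ 2 ≤ 0 by nlinarith)]
    nlinarith [abs_nonneg z]
  · rw [min_eq_right h, abs_of_nonneg (show 0 ≤ 1 - |z| ^ 2 by nlinarith [abs_nonneg z])]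
    nlinarith [abs_nonneg z, pow_nonneg (abs_nonneg z) 3]

lemma abs_F_le (z : ℝ) : |F z| ≤ 2 * (1 + |z| ^ 3) := by
  have hz : |z| ≤ 1 + |z| ^ 3 := by
    nlinarith [abs_nonneg z, sq_nonneg (|z| - 1), sq_nonneg (|z| + 1)]
  calc |F z| ≤ |z| + |z ^ 3| := abs_sub _ _
    _ ≤ 2 * (1 + |z| ^ 3) := by rw [abs_pow]; linarith

lemma abs_Psi_le_of_pos {δt : ℝ} (hδt : 0 < δt) (z : ℝ) :
    |Psi δt z| ≤ 2 * (1 + |z| ^ 3) := by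
  set u := exp (-2 * δt)
  have hu₀ : 0 < u := exp_pos _
  have hu₁ : u ≤ 1 := exp_le_one_iff.mpr (by linarith)
  set s := √(z ^ 2 + (1 - z ^ 2) * u)
  have hD : 0 < z ^ 2 + (1 - z ^ 2) * u := by nlinarith [sq_nonneg z]
  have hs : 0 < s := sqrt_pos.mpr hD
  have hPhi : Phi δt z - z = z * (1 - z ^ 2) * (1 - u) / (s * (1 + s)) := by
    rw [Phi, div_sqrt_sub_self hD]
    ring
  have hmin : min 1 |z| ≤ s * (1 + s) :=
    (min_one_abs_le_sqrt hu₀.le hu₁ z).trans (by nlinarith)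
  have hnum : |z| * |1 - z ^ 2| * (1 - u) ≤ 2 * δt * ((1 + |z| ^ 3) * (s * (1 + s))) := by
    have h1 : |z| * |1 - z ^ 2| ≤ (1 + |z| ^ 3) * (s * (1 + s)) :=
      (abs_mul_abs_one_sub_sq_le z).trans
        (by rw [mul_comm]; exact mul_le_mul_of_nonneg_left hmin (by positivity))
    calc |z| * |1 - z ^ 2| * (1 - u) ≤ ((1 + |z| ^ 3) * (s * (1 + s))) * (2 * δt) :=
          mul_le_mul h1 (one_sub_exp_neg_two_mul_le δt) (by linarith) (by positivity)
      _ = _ := by ring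
  rw [Psi, if_neg hδt.ne', hPhi, abs_div, abs_div, abs_mul, abs_mul, abs_of_pos hδt,
    abs_of_nonneg (by linarith : 0 ≤ 1 - u), abs_of_pos (by positivity : 0 < s * (1 + s)),
    div_div, div_le_iff₀ (by positivity)]
  linarith

/-- Uniform cubic growth of the modified nonlinearity: there is `C ∈ (0,∞)` such that
for every `δt ≥ 0` and every `z ∈ ℝ`, `|Ψ_{δt}(z)| ≤ C (1 + |z|³)`. -/
theorem psi_cubic_growth :
    ∃ C : ℝ, 0 < C ∧ ∀ δt : ℝ, 0 ≤ δt → ∀ z : ℝ,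
      |Psi δt z| ≤ C * (1 + |z| ^ 3) := by
  refine ⟨2, two_pos, fun δt hδt z => ?_⟩
  rcases hδt.eq_or_lt with rfl | hpos
  · simpa [Psi] using abs_F_le z
  · exact abs_Psi_le_of_pos hpos z
end

section
/- (Factorization estimate, Lemma 3.2.) Let E₁ and E₂ be real Banach spaces, let T > 0, p > 1, r ≥ 0, M > 0, and γ > 1/p + r. Let S : (0, T] → L(E₂, E₁) be a family of continuous linear operators satisfying ‖S(t)x‖_{E₁} ≤ M·t^{−r}·‖x‖_{E₂} for all t ∈ (0, T] and x ∈ E₂. Let f : (0, T) → E₂ be strongly measurable with ∫₀^T ‖f(s)‖_{E₂}^p ds < ∞, and assume that for each t ∈ (0, T] the map s ↦ S(t − s) f(s) is strongly measurable on (0, t). Then there exists a constant C = C(M, p, r, γ, T) ∈ (0,∞) such that for every t ∈ (0, T] the Bochner integral G_γ f(t) := ∫₀^t (t − s)^{γ−1} S(t − s) f(s) ds exists and ‖G_γ f(t)‖_{E₁} ≤ C·(∫₀^T ‖f(s)‖_{E₂}^p ds)^{1/p}. -/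
/-!
The operator bound turns the integrand into at most `M (t - s)^(γ - 1 - r) ‖f s‖`. By Hölder with
the conjugate exponent `q` of `p`, this is controlled by `‖f‖_{L^p}` times the `L^q` norm of the
kernel, and `∫₀ᵗ (t - s)^((γ - 1 - r) q) ds = t^(b + 1) / (b + 1)` with `b = (γ - 1 - r) q` is
finite exactly because `γ > 1/p + r` means `b > -1`.
-/

open MeasureTheory Set

theorem Real.HolderConjugate.neg_one_lt_mul {p q a : ℝ} (hpq : p.HolderConjugate q)
    (ha : 1 / p - 1 < a) : -1 < a * q := by
  have h : (1 / p - 1) * q = -1 := by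
    rw [show 1 / p - 1 = -(1 / q) by linarith [hpq.one_div_add_one_div], neg_mul,
      one_div_mul_cancel hpq.symm.ne_zero]
  exact h ▸ mul_lt_mul_of_pos_right ha hpq.symm.pos

theorem memLp_ofReal_of_integrable_norm_rpow {α E : Type*} [MeasurableSpace α] {μ : Measure α}
    [NormedAddCommGroup E] {f : α → E} {p : ℝ} (hp : 0 < p) (hf : AEStronglyMeasurable f μ)
    (hfp : Integrable (fun x => ‖f x‖ ^ p) μ) : MemLp f (ENNReal.ofReal p) μ := by
  rw [← integrable_norm_rpow_iff hf (by simpa using hp) ENNReal.ofReal_ne_top,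
    ENNReal.toReal_ofReal hp.le]
  exact hfp

theorem integrableOn_sub_rpow_Ioo {t b : ℝ} (ht : 0 ≤ t) (hb : -1 < b) :
    IntegrableOn (fun s => (t - s) ^ b) (Ioo 0 t) := by
  have h := (intervalIntegral.intervalIntegrable_rpow' hb (a := 0) (b := t)).comp_sub_left t
  rw [sub_self, sub_zero] at h
  exact (intervalIntegrable_iff_integrableOn_Ioo_of_le ht).mp h.symm

theorem integral_sub_rpow_Ioo {t b : ℝ} (ht : 0 ≤ t) (hb : -1 < b) :
    ∫ s in Ioo 0 t, (t - s) ^ b = t ^ (b + 1) / (b + 1) := by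
  rw [← integral_Ioc_eq_integral_Ioo, ← intervalIntegral.integral_of_le ht,
    intervalIntegral.integral_comp_sub_left (fun u => u ^ b) t, sub_self, sub_zero,
    integral_rpow (Or.inl hb), Real.zero_rpow (by linarith), sub_zero]

theorem memLp_sub_rpow_Ioo {t a q : ℝ} (ht : 0 ≤ t) (hq : 0 < q) (ha : -1 < a * q) :
    MemLp (fun s => (t - s) ^ a) (ENNReal.ofReal q) (volume.restrict (Ioo 0 t)) := by
  have hmeas : Measurable fun s : ℝ => (t - s) ^ a := by fun_prop
  refine memLp_ofReal_of_integrable_norm_rpow hq hmeas.aestronglyMeasurable ?_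
  refine (integrableOn_sub_rpow_Ioo ht ha).congr_fun (fun s hs => ?_) measurableSet_Ioo
  have hts : 0 < t - s := sub_pos.2 hs.2
  rw [Real.norm_of_nonneg (by positivity), ← Real.rpow_mul hts.le]

theorem integral_sub_rpow_mul_le {t p q a : ℝ} {g : ℝ → ℝ} (ht : 0 ≤ t)
    (hpq : p.HolderConjugate q) (ha : -1 < a * q) (hg_nonneg : ∀ s, 0 ≤ g s)
    (hg : MemLp g (ENNReal.ofReal p) (volume.restrict (Ioo 0 t))) :
    IntegrableOn (fun s => (t - s) ^ a * g s) (Ioo 0 t) ∧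
      ∫ s in Ioo 0 t, (t - s) ^ a * g s ≤
        (t ^ (a * q + 1) / (a * q + 1)) ^ (1 / q) * (∫ s in Ioo 0 t, g s ^ p) ^ (1 / p) := by
  have hk := memLp_sub_rpow_Ioo ht hpq.symm.pos ha
  have hk_nonneg : 0 ≤ᵐ[volume.restrict (Ioo 0 t)] fun s => (t - s) ^ a :=
    (ae_restrict_mem measurableSet_Ioo).mono fun s hs => by
      have : 0 < t - s := sub_pos.2 hs.2
      positivity
  have hkq : ∫ s in Ioo 0 t, ((t - s) ^ a) ^ q = ∫ s in Ioo 0 t, (t - s) ^ (a * q) :=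
    setIntegral_congr_fun measurableSet_Ioo fun s hs =>
      (Real.rpow_mul (sub_pos.2 hs.2).le _ _).symm
  have := hpq.ennrealOfReal
  refine ⟨hk.integrable_mul hg, ?_⟩
  calc ∫ s in Ioo 0 t, (t - s) ^ a * g s
      = ∫ s in Ioo 0 t, g s * (t - s) ^ a := by simp_rw [mul_comm]
    _ ≤ (∫ s in Ioo 0 t, g s ^ p) ^ (1 / p) * (∫ s in Ioo 0 t, ((t - s) ^ a) ^ q) ^ (1 / q) :=
      integral_mul_le_Lp_mul_Lq_of_nonneg hpq (.of_forall hg_nonneg) hk_nonneg hg hk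
    _ = _ := by rw [hkq, integral_sub_rpow_Ioo ht ha, mul_comm]

theorem norm_rpow_smul_le_of_norm_le {E : Type*} [NormedAddCommGroup E] [NormedSpace ℝ E]
    {u M r γ c : ℝ} {y : E} (hu : 0 < u) (hy : ‖y‖ ≤ M * u ^ (-r) * c) :
    ‖u ^ (γ - 1) • y‖ ≤ M * (u ^ (γ - 1 - r) * c) :=
  calc ‖u ^ (γ - 1) • y‖ = u ^ (γ - 1) * ‖y‖ := by
        rw [norm_smul, Real.norm_of_nonneg (by positivity)]
    _ ≤ u ^ (γ - 1) * (M * u ^ (-r) * c) := by gcongr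
    _ = M * (u ^ (γ - 1 - r) * c) := by
        rw [sub_eq_add_neg (γ - 1), Real.rpow_add hu]
        ring

theorem factorization_estimate_general
    {E₁ E₂ : Type*} [NormedAddCommGroup E₁] [NormedSpace ℝ E₁]
    [NormedAddCommGroup E₂] [NormedSpace ℝ E₂]
    (T p r M γ : ℝ) (hT : 0 < T) (hp : 1 < p) (hM : 0 < M)
    (hγ : 1 / p + r < γ)
    (S : ℝ → E₂ →L[ℝ] E₁)
    (hS : ∀ t ∈ Set.Ioc (0 : ℝ) T, ∀ x : E₂, ‖S t x‖ ≤ M * t ^ (-r) * ‖x‖)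
    (f : ℝ → E₂)
    (hf_meas : AEStronglyMeasurable f (volume.restrict (Set.Ioo (0 : ℝ) T)))
    (hf_int : IntegrableOn (fun s => ‖f s‖ ^ p) (Set.Ioo (0 : ℝ) T))
    (hSf_meas : ∀ t ∈ Set.Ioc (0 : ℝ) T,
      AEStronglyMeasurable (fun s => S (t - s) (f s))
        (volume.restrict (Set.Ioo (0 : ℝ) t))) :
    ∃ C : ℝ, 0 < C ∧ ∀ t ∈ Set.Ioc (0 : ℝ) T,
      IntegrableOn (fun s => (t - s) ^ (γ - 1) • S (t - s) (f s)) (Set.Ioo (0 : ℝ) t) ∧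
      ‖∫ s in Set.Ioo (0 : ℝ) t, (t - s) ^ (γ - 1) • S (t - s) (f s)‖
        ≤ C * (∫ s in Set.Ioo (0 : ℝ) T, ‖f s‖ ^ p) ^ (1 / p) := by
  obtain ⟨q, hpq⟩ : ∃ q, p.HolderConjugate q := ⟨_, .conjExponent hp⟩
  have ha : -1 < (γ - 1 - r) * q := hpq.neg_one_lt_mul (by linarith)
  have hb : 0 < (γ - 1 - r) * q + 1 := by linarith
  refine ⟨M * (T ^ ((γ - 1 - r) * q + 1) / ((γ - 1 - r) * q + 1)) ^ (1 / q), by positivity,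
    fun t ⟨ht0, htT⟩ => ?_⟩
  have hsub : Ioo 0 t ⊆ Ioo 0 T := Ioo_subset_Ioo_right htT
  have hfLp := memLp_ofReal_of_integrable_norm_rpow hpq.pos
    (hf_meas.mono_measure (Measure.restrict_mono hsub le_rfl)) (hf_int.mono_set hsub)
  obtain ⟨hint, hle⟩ := integral_sub_rpow_mul_le ht0.le hpq ha (fun s => norm_nonneg _) hfLp.norm
  have hbound : ∀ᵐ s ∂(volume.restrict (Ioo 0 t)),
      ‖(t - s) ^ (γ - 1) • S (t - s) (f s)‖ ≤ M * ((t - s) ^ (γ - 1 - r) * ‖f s‖) := by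
    filter_upwards [ae_restrict_mem measurableSet_Ioo] with s ⟨hs0, hst⟩
    exact norm_rpow_smul_le_of_norm_le (sub_pos.2 hst) (hS _ ⟨sub_pos.2 hst, by linarith⟩ _)
  have hmeas : AEStronglyMeasurable (fun s => (t - s) ^ (γ - 1) • S (t - s) (f s))
      (volume.restrict (Ioo 0 t)) :=
    (Measurable.aestronglyMeasurable (by fun_prop)).smul (hSf_meas t ⟨ht0, htT⟩)
  have hfp_le : ∫ s in Ioo 0 t, ‖f s‖ ^ p ≤ ∫ s in Ioo 0 T, ‖f s‖ ^ p :=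
    setIntegral_mono_set hf_int (.of_forall fun s => by positivity) hsub.eventuallyLE
  refine ⟨(hint.const_mul M).mono' hmeas hbound, ?_⟩
  calc ‖∫ s in Ioo 0 t, (t - s) ^ (γ - 1) • S (t - s) (f s)‖
      ≤ M * ∫ s in Ioo 0 t, (t - s) ^ (γ - 1 - r) * ‖f s‖ := by
        rw [← integral_const_mul]
        exact norm_integral_le_of_norm_le (hint.const_mul M) hbound
    _ ≤ M * ((T ^ ((γ - 1 - r) * q + 1) / ((γ - 1 - r) * q + 1)) ^ (1 / q) *
          (∫ s in Ioo 0 T, ‖f s‖ ^ p) ^ (1 / p)) := by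
        refine mul_le_mul_of_nonneg_left (hle.trans ?_) hM.le
        gcongr
        exact one_div_nonneg.2 hpq.symm.nonneg
    _ = _ := by ring

/-- Factorization estimate (Lemma 3.2). `E₁`, `E₂` Banach spaces, `T > 0`, `p > 1`,
`r ≥ 0`, `M > 0`, `γ > 1/p + r`, `S : (0,T] → L(E₂,E₁)` with
`‖S(t)x‖ ≤ M t^{-r} ‖x‖`, and `f : (0,T) → E₂` strongly measurable with
`∫₀ᵀ ‖f(s)‖ᵖ ds < ∞`, such that `s ↦ S(t-s) f(s)` is strongly measurable on `(0,t)`.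
Then there is `C = C(M,p,r,γ,T)` such that for each `t ∈ (0,T]` the Bochner integral
`G_γ f(t) = ∫₀ᵗ (t-s)^{γ-1} S(t-s) f(s) ds` exists and
`‖G_γ f(t)‖ ≤ C (∫₀ᵀ ‖f(s)‖ᵖ ds)^{1/p}`. -/
theorem factorization_estimate
    {E₁ E₂ : Type*} [NormedAddCommGroup E₁] [NormedSpace ℝ E₁] [CompleteSpace E₁]
    [NormedAddCommGroup E₂] [NormedSpace ℝ E₂]
    (T p r M γ : ℝ) (hT : 0 < T) (hp : 1 < p) (hr : 0 ≤ r) (hM : 0 < M)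
    (hγ : 1 / p + r < γ)
    (S : ℝ → E₂ →L[ℝ] E₁)
    (hS : ∀ t ∈ Set.Ioc (0 : ℝ) T, ∀ x : E₂, ‖S t x‖ ≤ M * t ^ (-r) * ‖x‖)
    (f : ℝ → E₂)
    (hf_meas : AEStronglyMeasurable f (volume.restrict (Set.Ioo (0 : ℝ) T)))
    (hf_int : IntegrableOn (fun s => ‖f s‖ ^ p) (Set.Ioo (0 : ℝ) T))
    (hSf_meas : ∀ t ∈ Set.Ioc (0 : ℝ) T,
      AEStronglyMeasurable (fun s => S (t - s) (f s))
        (volume.restrict (Set.Ioo (0 : ℝ) t))) :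
    ∃ C : ℝ, 0 < C ∧ ∀ t ∈ Set.Ioc (0 : ℝ) T,
      IntegrableOn (fun s => (t - s) ^ (γ - 1) • S (t - s) (f s)) (Set.Ioo (0 : ℝ) t) ∧
      ‖∫ s in Set.Ioo (0 : ℝ) t, (t - s) ^ (γ - 1) • S (t - s) (f s)‖
        ≤ C * (∫ s in Set.Ioo (0 : ℝ) T, ‖f s‖ ^ p) ^ (1 / p) :=
  factorization_estimate_general T p r M γ hT hp hM hγ S hS f hf_meas hf_int hSf_meas
end

section
/- (Increment bound for a regular diagonal noise semigroup.) Let (λ_k)_{k ≥ 1} be positive reals, (q_k)_{k ≥ 1} nonnegative reals, and β ∈ (0, 1/2] with Σ_{k=1}^∞ q_k·λ_k^{2β−1} < ∞. Then for every t₀ ≥ 0 and δ ≥ 0, ∫₀^{t₀} Σ_{k=1}^∞ q_k · exp(−2·λ_k·(t₀ − r)) · (1 − exp(−λ_k·δ))² dr ≤ (δ^{2β}/2) · Σ_{k=1}^∞ q_k·λ_k^{2β−1}. -/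
/-!
Each mode is bounded separately and the bounds are summed by monotone convergence.
Since `1 - e^{-x} ≤ min 1 x ≤ x^β` for `β ∈ [0, 1]`, the increment factor satisfies
`(1 - e^{-λδ})² ≤ (λδ)^{2β}`, and the time integral of `e^{-2λ(t₀ - r)}` over `(0, t₀]` is at most
its integral over `(-∞, t₀]`, which is `1 / (2λ)`.
-/

open MeasureTheory Real Set

lemma one_sub_exp_neg_le_rpow {x s : ℝ} (hx : 0 ≤ x) (hs₀ : 0 ≤ s) (hs₁ : s ≤ 1) :
    1 - exp (-x) ≤ x ^ s := by
  rcases le_total x 1 with hx₁ | hx₁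
  · calc 1 - exp (-x) ≤ x := by linarith [add_one_le_exp (-x)]
      _ ≤ x ^ s := self_le_rpow_of_le_one hx hx₁ hs₁
  · calc 1 - exp (-x) ≤ 1 := by linarith [exp_pos (-x)]
      _ ≤ x ^ s := one_le_rpow hx₁ hs₀

lemma one_sub_exp_neg_sq_le_rpow {x s : ℝ} (hx : 0 ≤ x) (hs₀ : 0 ≤ s) (hs₁ : s ≤ 1) :
    (1 - exp (-x)) ^ 2 ≤ x ^ (2 * s) := by
  have h₀ : 0 ≤ 1 - exp (-x) := by linarith [exp_le_one_iff.2 (neg_nonpos.2 hx)]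
  calc (1 - exp (-x)) ^ 2 ≤ (x ^ s) ^ 2 := by gcongr; exact one_sub_exp_neg_le_rpow hx hs₀ hs₁
    _ = x ^ (2 * s) := by rw [mul_comm, rpow_mul hx, rpow_two]

lemma integrableOn_exp_mul_sub_Iic {a : ℝ} (ha : 0 < a) (t : ℝ) :
    IntegrableOn (fun r => exp (a * (r - t))) (Iic t) := by
  simp_rw [mul_sub, exp_sub]
  exact (integrableOn_exp_mul_Iic ha t).div_const _

lemma integral_exp_mul_sub_Iic {a : ℝ} (ha : 0 < a) (t : ℝ) :
    ∫ r in Iic t, exp (a * (r - t)) = a⁻¹ := by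
  simp_rw [mul_sub, exp_sub]
  rw [integral_div, integral_exp_mul_Iic ha, div_div_cancel_left' (exp_pos _).ne']

lemma setLIntegral_exp_mul_sub_Ioc_le {a : ℝ} (ha : 0 < a) (s t : ℝ) :
    ∫⁻ r in Ioc s t, ENNReal.ofReal (exp (a * (r - t))) ≤ ENNReal.ofReal a⁻¹ :=
  calc ∫⁻ r in Ioc s t, ENNReal.ofReal (exp (a * (r - t)))
      ≤ ∫⁻ r in Iic t, ENNReal.ofReal (exp (a * (r - t))) :=
        lintegral_mono_set Ioc_subset_Iic_self
    _ = ENNReal.ofReal a⁻¹ := by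
        rw [← integral_exp_mul_sub_Iic ha t, ofReal_integral_eq_lintegral_ofReal
          (integrableOn_exp_mul_sub_Iic ha t) (ae_of_all _ fun r => (exp_pos _).le)]

lemma setLIntegral_mode_increment_le {lam q β s t δ : ℝ} (hlam : 0 < lam) (hq : 0 ≤ q)
    (hβ₀ : 0 ≤ β) (hβ₁ : β ≤ 1) (hδ : 0 ≤ δ) :
    ∫⁻ r in Ioc s t, ENNReal.ofReal
        (q * exp (-2 * lam * (t - r)) * (1 - exp (-lam * δ)) ^ 2)
      ≤ ENNReal.ofReal (δ ^ (2 * β) / 2 * (q * lam ^ (2 * β - 1))) := by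
  set c := q * (1 - exp (-lam * δ)) ^ 2
  have hc : 0 ≤ c := by positivity
  have hc_le : c ≤ q * (lam ^ (2 * β) * δ ^ (2 * β)) := by
    refine mul_le_mul_of_nonneg_left ?_ hq
    rw [← mul_rpow hlam.le hδ, neg_mul]
    exact one_sub_exp_neg_sq_le_rpow (by positivity) hβ₀ hβ₁
  have hfactor : ∀ r, q * exp (-2 * lam * (t - r)) * (1 - exp (-lam * δ)) ^ 2
      = c * exp (2 * lam * (r - t)) := fun r => by
    rw [show -2 * lam * (t - r) = 2 * lam * (r - t) by ring]; ring
  simp_rw [hfactor, ENNReal.ofReal_mul hc]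
  rw [lintegral_const_mul _ (by fun_prop)]
  calc ENNReal.ofReal c * ∫⁻ r in Ioc s t, ENNReal.ofReal (exp (2 * lam * (r - t)))
      ≤ ENNReal.ofReal c * ENNReal.ofReal (2 * lam)⁻¹ := by
        gcongr; exact setLIntegral_exp_mul_sub_Ioc_le (by positivity) s t
    _ ≤ ENNReal.ofReal (δ ^ (2 * β) / 2 * (q * lam ^ (2 * β - 1))) := by
        rw [← ENNReal.ofReal_mul hc]
        apply ENNReal.ofReal_le_ofReal
        rw [rpow_sub_one hlam.ne']
        calc c * (2 * lam)⁻¹ ≤ q * (lam ^ (2 * β) * δ ^ (2 * β)) * (2 * lam)⁻¹ := by gcongr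
          _ = _ := by field_simp

theorem diagonal_noise_increment_bound_general (lam q : ℕ → ℝ)
    (hlam : ∀ k : ℕ, 1 ≤ k → 0 < lam k) (hq : ∀ k : ℕ, 1 ≤ k → 0 ≤ q k)
    (β : ℝ) (hβ : β ∈ Set.Ioc (0 : ℝ) (1 / 2))
    (hsum : Summable (fun k : ℕ => q (k + 1) * lam (k + 1) ^ (2 * β - 1)))
    (t₀ δ : ℝ) (hδ : 0 ≤ δ) :
    (∫⁻ r in Set.Ioc (0 : ℝ) t₀, ∑' k : ℕ,
        ENNReal.ofReal (q (k + 1) * Real.exp (-2 * lam (k + 1) * (t₀ - r)) *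
          (1 - Real.exp (-lam (k + 1) * δ)) ^ 2))
      ≤ ENNReal.ofReal (δ ^ (2 * β) / 2 *
          ∑' k : ℕ, q (k + 1) * lam (k + 1) ^ (2 * β - 1)) := by
  have hlam' k : 0 < lam (k + 1) := hlam (k + 1) k.succ_pos
  have hq' k : 0 ≤ q (k + 1) := hq (k + 1) k.succ_pos
  rw [lintegral_tsum fun k => by fun_prop]
  calc _ ≤ ∑' k, ENNReal.ofReal (δ ^ (2 * β) / 2 * (q (k + 1) * lam (k + 1) ^ (2 * β - 1))) :=
        ENNReal.tsum_le_tsum fun k => setLIntegral_mode_increment_le (hlam' k) (hq' k) hβ.1.le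
          (by linarith [hβ.2]) hδ
    _ = _ := by
        rw [← ENNReal.ofReal_tsum_of_nonneg (fun k => by have := hlam' k; have := hq' k; positivity)
          (hsum.mul_left _), tsum_mul_left]

/-- Increment bound for a regular diagonal noise semigroup: if `λ_k > 0`, `q_k ≥ 0`,
`β ∈ (0, 1/2]` and `Σ q_k λ_k^{2β-1} < ∞`, then for every `t₀ ≥ 0` and `δ ≥ 0`,
`∫₀^{t₀} Σ_k q_k exp(-2 λ_k (t₀-r)) (1 - exp(-λ_k δ))² dr ≤ (δ^{2β}/2) Σ_k q_k λ_k^{2β-1}`. -/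
theorem diagonal_noise_increment_bound (lam q : ℕ → ℝ)
    (hlam : ∀ k : ℕ, 1 ≤ k → 0 < lam k) (hq : ∀ k : ℕ, 1 ≤ k → 0 ≤ q k)
    (β : ℝ) (hβ : β ∈ Set.Ioc (0 : ℝ) (1 / 2))
    (hsum : Summable (fun k : ℕ => q (k + 1) * lam (k + 1) ^ (2 * β - 1)))
    (t₀ δ : ℝ) (ht₀ : 0 ≤ t₀) (hδ : 0 ≤ δ) :
    (∫⁻ r in Set.Ioc (0 : ℝ) t₀, ∑' k : ℕ,
        ENNReal.ofReal (q (k + 1) * Real.exp (-2 * lam (k + 1) * (t₀ - r)) *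
          (1 - Real.exp (-lam (k + 1) * δ)) ^ 2))
      ≤ ENNReal.ofReal (δ ^ (2 * β) / 2 *
          ∑' k : ℕ, q (k + 1) * lam (k + 1) ^ (2 * β - 1)) :=
  diagonal_noise_increment_bound_general lam q hlam hq β hβ hsum t₀ δ hδ
end

section
/- (Increment bound for the white-noise diagonal semigroup, key estimate for the order-1/4 rate.) Let c > 0, T > 0, and let (λ_k)_{k ≥ 1} be positive reals with λ_k ≥ c·k² for all k ≥ 1. Then there exists a constant C = C(c, T) ∈ (0,∞) such that for every t₀ ∈ [0, T] and every δ ≥ 0, ∫₀^{t₀} Σ_{k=1}^∞ exp(−2·λ_k·(t₀ − r)) · (1 − exp(−λ_k·δ))² dr ≤ C·δ^{1/2}. -/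
/-!
Each mode contributes `∫₀^t e^{-2λ(t-r)} dr · (1 - e^{-λδ})² ≤ (1 - e^{-λδ})² / (2λ) ≤ min(δ, 1/λ)`,
using `1 - e^{-x} ≤ min(x, 1)`. With `λ_k ≥ c k²`, summing `min(δ, 1/(c k²))` over `k`
costs `δ` per mode for the `≈ δ^{-1/2}` modes with `k ≤ δ^{-1/2}` and a tail
`∑_{k > δ^{-1/2}} 1/(c k²) ≲ δ^{1/2}/c` beyond, giving `(1 + 2/c) √δ`.
-/

open Finset MeasureTheory

theorem sum_range_inv_add_one_sq_le (K m : ℕ) :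
    ∑ x ∈ range m, ((((K + x : ℕ) : ℝ) + 1) ^ 2)⁻¹ ≤ 2 / ((K : ℝ) + 1) := by
  have hreindex : ∑ x ∈ range m, ((((K + x : ℕ) : ℝ) + 1) ^ 2)⁻¹
      = ∑ i ∈ Ioo K (K + 1 + m), (((i : ℕ) : ℝ) ^ 2)⁻¹ := by
    rw [← Ico_add_one_left_eq_Ioo, sum_Ico_eq_sum_range, Nat.add_sub_cancel_left]
    refine sum_congr rfl fun x _ => ?_
    push_cast
    ring
  exact hreindex ▸ sum_Ioo_inv_sq_le K (K + 1 + m)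

theorem sum_range_min_inv_mul_add_one_sq_le {c δ : ℝ} (hc : 0 < c) (hδ : 0 ≤ δ) (n : ℕ) :
    ∑ k ∈ range n, min δ (c * ((k : ℝ) + 1) ^ 2)⁻¹ ≤ (1 + 2 / c) * √δ := by
  rcases hδ.eq_or_lt with rfl | hδ
  · rw [Real.sqrt_zero, mul_zero]
    exact sum_nonpos fun k _ => min_le_left _ _
  set K := ⌊(√δ)⁻¹⌋₊
  have hsqrt : 0 < √δ := Real.sqrt_pos.mpr hδ
  have hhead : (K : ℝ) * δ ≤ √δ := calc
    (K : ℝ) * δ ≤ (√δ)⁻¹ * δ := by gcongr; exact Nat.floor_le (by positivity)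
    _ = √δ := by rw [inv_mul_eq_div, Real.div_sqrt]
  have htail : 2 / ((K : ℝ) + 1) ≤ 2 * √δ := by
    rw [div_le_iff₀ (by positivity)]
    have := Nat.lt_floor_add_one (√δ)⁻¹
    rw [inv_lt_iff_one_lt_mul₀ hsqrt] at this
    nlinarith
  calc ∑ k ∈ range n, min δ (c * ((k : ℝ) + 1) ^ 2)⁻¹
      ≤ ∑ k ∈ range (K + n), min δ (c * ((k : ℝ) + 1) ^ 2)⁻¹ :=
        sum_le_sum_of_subset_of_nonneg (range_subset_range.mpr (Nat.le_add_left n K))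
          fun k _ _ => by positivity
    _ = ∑ k ∈ range K, min δ (c * ((k : ℝ) + 1) ^ 2)⁻¹
        + ∑ x ∈ range n, min δ (c * (((K + x : ℕ) : ℝ) + 1) ^ 2)⁻¹ := sum_range_add _ _ _
    _ ≤ ∑ k ∈ range K, δ + c⁻¹ * ∑ x ∈ range n, ((((K + x : ℕ) : ℝ) + 1) ^ 2)⁻¹ := by
        rw [mul_sum]
        gcongr with k _ x _
        · exact min_le_left _ _
        · exact (min_le_right _ _).trans_eq (mul_inv _ _)
    _ ≤ K * δ + c⁻¹ * (2 / ((K : ℝ) + 1)) := by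
        rw [sum_const, card_range, nsmul_eq_mul]
        gcongr
        exact sum_range_inv_add_one_sq_le K n
    _ ≤ √δ + c⁻¹ * (2 * √δ) := by gcongr
    _ = (1 + 2 / c) * √δ := by ring

theorem tsum_ofReal_min_inv_mul_add_one_sq_le {c δ : ℝ} (hc : 0 < c) (hδ : 0 ≤ δ) :
    ∑' k : ℕ, ENNReal.ofReal (min δ (c * ((k : ℝ) + 1) ^ 2)⁻¹)
      ≤ ENNReal.ofReal ((1 + 2 / c) * √δ) :=
  ENNReal.tsum_le_of_sum_range_le fun n => by
    rw [← ENNReal.ofReal_sum_of_nonneg fun k _ => by positivity]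
    exact ENNReal.ofReal_le_ofReal (sum_range_min_inv_mul_add_one_sq_le hc hδ n)

theorem lintegral_Iic_exp_neg_mul_sub {a : ℝ} (ha : 0 < a) (t : ℝ) :
    ∫⁻ r in Set.Iic t, ENNReal.ofReal (Real.exp (-(a * (t - r)))) = ENNReal.ofReal a⁻¹ := by
  have hsplit : ∀ r, Real.exp (-(a * (t - r))) = Real.exp (-(a * t)) * Real.exp (a * r) := by
    intro r; rw [← Real.exp_add]; ring_nf
  simp_rw [hsplit]
  rw [← ofReal_integral_eq_lintegral_ofReal ((integrableOn_exp_mul_Iic ha t).const_mul _)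
    (Filter.Eventually.of_forall fun r => by positivity), integral_const_mul,
    integral_exp_mul_Iic ha, mul_div_assoc', ← Real.exp_add, neg_add_cancel, Real.exp_zero,
    one_div]

theorem one_sub_exp_neg_mul_sq_div_le {l δ : ℝ} (hl : 0 < l) (hδ : 0 ≤ δ) :
    (1 - Real.exp (-l * δ)) ^ 2 / l ≤ min δ l⁻¹ := by
  have hle_one : Real.exp (-l * δ) ≤ 1 := Real.exp_le_one_iff.mpr (by nlinarith)
  have hle_mul : 1 - Real.exp (-l * δ) ≤ l * δ := by
    linarith [neg_mul l δ ▸ Real.one_sub_le_exp_neg (l * δ)]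
  have hnonneg := Real.exp_nonneg (-l * δ)
  refine le_min ?_ ?_ <;> rw [div_le_iff₀ hl]
  · nlinarith
  · rw [inv_mul_cancel₀ hl.ne']; nlinarith

theorem lintegral_exp_mul_one_sub_exp_sq_le {l : ℝ} (hl : 0 < l) (t : ℝ) {δ : ℝ} (hδ : 0 ≤ δ) :
    ∫⁻ r in Set.Ioc 0 t, ENNReal.ofReal
        (Real.exp (-2 * l * (t - r)) * (1 - Real.exp (-l * δ)) ^ 2)
      ≤ ENNReal.ofReal (min δ l⁻¹) := by
  set A := (1 - Real.exp (-l * δ)) ^ 2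
  calc ∫⁻ r in Set.Ioc 0 t, ENNReal.ofReal (Real.exp (-2 * l * (t - r)) * A)
      ≤ ∫⁻ r in Set.Iic t, ENNReal.ofReal (Real.exp (-(2 * l * (t - r)))) * ENNReal.ofReal A := by
        refine (lintegral_mono_set Set.Ioc_subset_Iic_self).trans_eq ?_
        simp_rw [neg_mul, ENNReal.ofReal_mul (Real.exp_nonneg _)]
    _ = ENNReal.ofReal (A / (2 * l)) := by
        rw [lintegral_mul_const _ (by fun_prop), lintegral_Iic_exp_neg_mul_sub (by positivity),
          ← ENNReal.ofReal_mul (by positivity), inv_mul_eq_div]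
    _ ≤ ENNReal.ofReal (min δ l⁻¹) := by
        refine ENNReal.ofReal_le_ofReal ((div_le_div_of_nonneg_left (sq_nonneg _) hl ?_).trans
          (one_sub_exp_neg_mul_sq_div_le hl hδ))
        linarith

theorem white_noise_increment_bound_general (c T : ℝ) (hc : 0 < c)
    (lam : ℕ → ℝ)
    (hlam : ∀ k : ℕ, 1 ≤ k → c * (k : ℝ) ^ 2 ≤ lam k) :
    ∃ C : ℝ, 0 < C ∧ ∀ t₀ ∈ Set.Icc (0 : ℝ) T, ∀ δ : ℝ, 0 ≤ δ →
      (∫⁻ r in Set.Ioc (0 : ℝ) t₀, ∑' k : ℕ,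
          ENNReal.ofReal (Real.exp (-2 * lam (k + 1) * (t₀ - r)) *
            (1 - Real.exp (-lam (k + 1) * δ)) ^ 2))
        ≤ ENNReal.ofReal (C * δ ^ ((1 : ℝ) / 2)) := by
  refine ⟨1 + 2 / c, by positivity, fun t₀ _ δ hδ => ?_⟩
  have hlam_succ : ∀ k : ℕ, c * ((k : ℝ) + 1) ^ 2 ≤ lam (k + 1) := fun k => by
    exact_mod_cast hlam (k + 1) k.succ_pos
  have hlam_pos : ∀ k : ℕ, 0 < lam (k + 1) := fun k =>
    (by positivity : 0 < c * ((k : ℝ) + 1) ^ 2).trans_le (hlam_succ k)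
  have hmode : ∀ k : ℕ, min δ (lam (k + 1))⁻¹ ≤ min δ (c * ((k : ℝ) + 1) ^ 2)⁻¹ := fun k =>
    min_le_min_left _ (inv_anti₀ (by positivity) (hlam_succ k))
  calc _ = ∑' k : ℕ, ∫⁻ r in Set.Ioc (0 : ℝ) t₀, ENNReal.ofReal
          (Real.exp (-2 * lam (k + 1) * (t₀ - r)) * (1 - Real.exp (-lam (k + 1) * δ)) ^ 2) :=
        lintegral_tsum fun k => by fun_prop
    _ ≤ ∑' k : ℕ, ENNReal.ofReal (min δ (c * ((k : ℝ) + 1) ^ 2)⁻¹) :=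
        ENNReal.tsum_le_tsum fun k =>
          (lintegral_exp_mul_one_sub_exp_sq_le (hlam_pos k) t₀ hδ).trans
            (ENNReal.ofReal_le_ofReal (hmode k))
    _ ≤ ENNReal.ofReal ((1 + 2 / c) * √δ) := tsum_ofReal_min_inv_mul_add_one_sq_le hc hδ
    _ = ENNReal.ofReal ((1 + 2 / c) * δ ^ ((1 : ℝ) / 2)) := by rw [Real.sqrt_eq_rpow]

/-- Increment bound for the white-noise diagonal semigroup (key estimate for the
order-1/4 rate): if `λ_k ≥ c k²` with `c > 0`, then there is `C = C(c,T) > 0` such that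
for every `t₀ ∈ [0,T]` and `δ ≥ 0`,
`∫₀^{t₀} Σ_k exp(-2 λ_k (t₀-r)) (1 - exp(-λ_k δ))² dr ≤ C δ^{1/2}`. -/
theorem white_noise_increment_bound (c T : ℝ) (hc : 0 < c) (hT : 0 < T)
    (lam : ℕ → ℝ) (hpos : ∀ k : ℕ, 1 ≤ k → 0 < lam k)
    (hlam : ∀ k : ℕ, 1 ≤ k → c * (k : ℝ) ^ 2 ≤ lam k) :
    ∃ C : ℝ, 0 < C ∧ ∀ t₀ ∈ Set.Icc (0 : ℝ) T, ∀ δ : ℝ, 0 ≤ δ →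
      (∫⁻ r in Set.Ioc (0 : ℝ) t₀, ∑' k : ℕ,
          ENNReal.ofReal (Real.exp (-2 * lam (k + 1) * (t₀ - r)) *
            (1 - Real.exp (-lam (k + 1) * δ)) ^ 2))
        ≤ ENNReal.ofReal (C * δ ^ ((1 : ℝ) / 2)) :=
  white_noise_increment_bound_general c T hc lam hlam
end

section
/- (Hölder-in-time smoothing of a diagonal semigroup on ℓ².) Let (λ_k)_{k ≥ 1} be positive reals and η ∈ (0, 1]. Then for all 0 < s₀ ≤ t₀ and every square-summable real sequence (x_k)_{k ≥ 1}, Σ_{k=1}^∞ (exp(−λ_k·s₀) − exp(−λ_k·t₀))² · x_k² ≤ (η/e)^{2η} · s₀^{−2η} · (t₀ − s₀)^{2η} · Σ_{k=1}^∞ x_k². -/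
/-!
Each coefficient factors as `exp (-λ s) (1 - exp (-λ (t - s)))`. Since `1 - exp (-a) ≤ min a 1 ≤ a ^ η`,
it is at most `λ ^ η exp (-λ s) (t - s) ^ η`, and maximising `λ ^ η exp (-λ s)` over `λ > 0` (the
maximum `(η / (e s)) ^ η` is attained at `λ = η / s`) gives a bound uniform in `k`. Squaring and
summing against `x_k²` finishes the proof.
-/

open Real

theorem rpow_mul_exp_neg_mul_le {η s l : ℝ} (hη : 0 < η) (hs : 0 < s) (hl : 0 ≤ l) :
    l ^ η * exp (-(l * s)) ≤ (η / (exp 1 * s)) ^ η := by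
  have hbase : l * exp (-(l * s / η)) ≤ η / (exp 1 * s) :=
    calc l * exp (-(l * s / η)) = η / s * (l * s / η * exp (-(l * s / η))) := by
          field_simp
      _ ≤ η / s * exp (-1) := by gcongr; exact mul_exp_neg_le_exp_neg_one _
      _ = η / (exp 1 * s) := by rw [exp_neg]; field_simp
  have hpow : (l * exp (-(l * s / η))) ^ η = l ^ η * exp (-(l * s)) := by
    rw [mul_rpow hl (exp_pos _).le, ← exp_mul, neg_mul, div_mul_cancel₀ _ hη.ne']
  rw [← hpow]
  exact rpow_le_rpow (by positivity) hbase hη.le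

theorem one_sub_exp_neg_le_rpow_s14 {η a : ℝ} (hη₀ : 0 ≤ η) (hη₁ : η ≤ 1) (ha : 0 ≤ a) :
    1 - exp (-a) ≤ a ^ η := by
  rcases le_total a 1 with ha₁ | ha₁
  · calc 1 - exp (-a) ≤ a := by linarith [add_one_le_exp (-a)]
      _ = a ^ (1 : ℝ) := (rpow_one a).symm
      _ ≤ a ^ η := rpow_le_rpow_of_exponent_ge' ha ha₁ hη₀ hη₁
  · linarith [one_le_rpow ha₁ hη₀, exp_pos (-a)]

section ExpDifference

variable {s t l : ℝ}

theorem exp_neg_mul_sub_exp_neg_mul_nonneg (hst : s ≤ t) (hl : 0 ≤ l) :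
    0 ≤ exp (-l * s) - exp (-l * t) := by
  have : -l * t ≤ -l * s := by nlinarith
  linarith [exp_le_exp.2 this]

theorem exp_neg_mul_sub_exp_neg_mul_le {η : ℝ} (hη₀ : 0 < η) (hη₁ : η ≤ 1) (hs : 0 < s)
    (hst : s ≤ t) (hl : 0 ≤ l) :
    exp (-l * s) - exp (-l * t) ≤ (η / exp 1) ^ η * s ^ (-η) * (t - s) ^ η := by
  have hts : 0 ≤ t - s := sub_nonneg.2 hst
  calc exp (-l * s) - exp (-l * t) = exp (-(l * s)) * (1 - exp (-(l * (t - s)))) := by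
        rw [mul_sub, mul_one, ← exp_add]; ring_nf
    _ ≤ exp (-(l * s)) * (l * (t - s)) ^ η := by
        gcongr; exact one_sub_exp_neg_le_rpow_s14 hη₀.le hη₁ (by positivity)
    _ = l ^ η * exp (-(l * s)) * (t - s) ^ η := by rw [mul_rpow hl hts]; ring
    _ ≤ (η / (exp 1 * s)) ^ η * (t - s) ^ η := by
        gcongr; exact rpow_mul_exp_neg_mul_le hη₀ hs hl
    _ = (η / exp 1) ^ η * s ^ (-η) * (t - s) ^ η := by
        rw [← div_div, div_eq_mul_inv _ s, mul_rpow (by positivity) (by positivity),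
          inv_rpow hs.le, rpow_neg hs.le]

theorem sq_exp_neg_mul_sub_exp_neg_mul_le {η : ℝ} (hη₀ : 0 < η) (hη₁ : η ≤ 1) (hs : 0 < s)
    (hst : s ≤ t) (hl : 0 ≤ l) :
    (exp (-l * s) - exp (-l * t)) ^ 2
      ≤ (η / exp 1) ^ (2 * η) * s ^ (-(2 * η)) * (t - s) ^ (2 * η) := by
  have hts : 0 ≤ t - s := sub_nonneg.2 hst
  calc (exp (-l * s) - exp (-l * t)) ^ 2
      ≤ ((η / exp 1) ^ η * s ^ (-η) * (t - s) ^ η) ^ 2 :=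
        pow_le_pow_left₀ (exp_neg_mul_sub_exp_neg_mul_nonneg hst hl)
          (exp_neg_mul_sub_exp_neg_mul_le hη₀ hη₁ hs hst hl) 2
    _ = (η / exp 1) ^ (2 * η) * s ^ (-(2 * η)) * (t - s) ^ (2 * η) := by
        simp only [mul_pow, ← rpow_mul_natCast (by positivity : (0 : ℝ) ≤ η / exp 1),
          ← rpow_mul_natCast hs.le, ← rpow_mul_natCast hts]
        ring_nf

end ExpDifference

theorem tsum_mul_le_mul_tsum_of_le {ι : Type*} {a b : ι → ℝ} {C : ℝ} (ha : ∀ i, 0 ≤ a i)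
    (haC : ∀ i, a i ≤ C) (hb : ∀ i, 0 ≤ b i) (hbs : Summable b) :
    ∑' i, a i * b i ≤ C * ∑' i, b i := by
  have hle : ∀ i, a i * b i ≤ C * b i := fun i => mul_le_mul_of_nonneg_right (haC i) (hb i)
  rw [← tsum_mul_left]
  exact (hbs.mul_left C).of_nonneg_of_le (fun i => mul_nonneg (ha i) (hb i)) hle
    |>.tsum_le_tsum hle (hbs.mul_left C)

/-- Hölder-in-time smoothing of a diagonal semigroup on `ℓ²`: for `λ_k > 0`,
`η ∈ (0,1]`, `0 < s₀ ≤ t₀` and any square-summable sequence `(x_k)`,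
`Σ_k (exp(-λ_k s₀) - exp(-λ_k t₀))² x_k² ≤ (η/e)^{2η} s₀^{-2η} (t₀-s₀)^{2η} Σ_k x_k²`. -/
theorem diagonal_semigroup_holder_smoothing (lam : ℕ → ℝ)
    (hlam : ∀ k : ℕ, 1 ≤ k → 0 < lam k)
    (η : ℝ) (hη : η ∈ Set.Ioc (0 : ℝ) 1)
    (s₀ t₀ : ℝ) (hs₀ : 0 < s₀) (hst : s₀ ≤ t₀)
    (x : ℕ → ℝ) (hx : Summable (fun k : ℕ => x (k + 1) ^ 2)) :
    (∑' k : ℕ, (Real.exp (-lam (k + 1) * s₀) - Real.exp (-lam (k + 1) * t₀)) ^ 2 *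
        x (k + 1) ^ 2)
      ≤ (η / Real.exp 1) ^ (2 * η) * s₀ ^ (-(2 * η)) * (t₀ - s₀) ^ (2 * η) *
          ∑' k : ℕ, x (k + 1) ^ 2 := by
  have hlam' : ∀ k : ℕ, 0 ≤ lam (k + 1) := fun k => (hlam (k + 1) k.succ_pos).le
  exact tsum_mul_le_mul_tsum_of_le (fun _ => sq_nonneg _)
    (fun k => sq_exp_neg_mul_sub_exp_neg_mul_le hη.1 hη.2 hs₀ hst (hlam' k))
    (fun _ => sq_nonneg _) hx
end

section
/- (L^q local Lipschitz estimate for the modified nonlinearity via essential supremum norms.) Let (O, μ) be a measure space and let δt₀ ∈ (0,1), q ∈ [1, ∞). There exists a constant C = C(δt₀) ∈ (0,∞) such that for every δt ∈ [0, δt₀] and all measurable functions u, v : O → ℝ with finite essential supremum norms, ‖Ψ_{δt}∘u − Ψ_{δt}∘v‖_{L^q(μ)} ≤ C·‖u − v‖_{L^q(μ)}·(1 + ‖u‖_{L^∞(μ)}² + ‖v‖_{L^∞(μ)}²). -/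
open MeasureTheory

open Real
open scoped ENNReal

/-! For `δt > 0`, with `ε = exp (-2δt)` and `R = z² + (1 - z²) ε ≥ ε`, the derivative of `Ψ_δt` is
`(ε R^{-3/2} - 1) / δt`. Both `R - ε = (1 - ε) z²` and `1 - R = (1 - ε)(1 - z²)` carry the factor
`1 - ε ≤ 2δt`, which cancels the `1/δt`, while `R ≥ ε` keeps `R^{-3/2} ≤ exp (3δt)`; hence
`|Ψ_δt'(z)| ≤ 4 exp (3δt) (1 + z²)`, as for `F' = 1 - 3z²`. The mean value theorem gives
`|Ψ_δt a - Ψ_δt b| ≤ C (1 + a² + b²) |a - b|`, and bounding `a²`, `b²` almost everywhere by the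
squared essential suprema gives the estimate in every `L^p`. -/

theorem abs_sub_le_of_forall_abs_deriv_le {f f' : ℝ → ℝ} {K : ℝ}
    (hf : ∀ z, HasDerivAt f (f' z) z) (hf' : ∀ z, |f' z| ≤ K * (1 + z ^ 2)) (a b : ℝ) :
    |f a - f b| ≤ K * (1 + a ^ 2 + b ^ 2) * |a - b| := by
  have hK : 0 ≤ K := by simpa using (abs_nonneg _).trans (hf' 0)
  have hbound : ∀ z ∈ Set.uIcc a b, ‖f' z‖ ≤ K * (1 + a ^ 2 + b ^ 2) := by
    intro z hz
    have hz2 : z ^ 2 ≤ a ^ 2 + b ^ 2 := by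
      rcases Set.mem_uIcc.1 hz with ⟨h1, h2⟩ | ⟨h1, h2⟩ <;>
        nlinarith [mul_nonneg (sub_nonneg.2 h1) (sub_nonneg.2 h2), sq_nonneg (a + b - z)]
    exact (hf' z).trans (mul_le_mul_of_nonneg_left (by linarith) hK)
  simpa only [Real.norm_eq_abs] using Convex.norm_image_sub_le_of_norm_hasDerivWithin_le
    (fun z _ => (hf z).hasDerivWithinAt) hbound (convex_uIcc a b) Set.right_mem_uIcc
    Set.left_mem_uIcc

theorem enorm_sub_le_of_abs_sub_le {f : ℝ → ℝ} {K : ℝ}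
    (hf : ∀ a b, |f a - f b| ≤ K * (1 + a ^ 2 + b ^ 2) * |a - b|) (a b : ℝ) :
    ‖f a - f b‖ₑ ≤ ENNReal.ofReal K * (1 + ‖a‖ₑ ^ 2 + ‖b‖ₑ ^ 2) * ‖a - b‖ₑ := by
  have hsq (r : ℝ) : ‖r‖ₑ ^ 2 = ENNReal.ofReal (r ^ 2) := by
    rw [Real.enorm_eq_ofReal_abs, ← ENNReal.ofReal_pow (abs_nonneg r), sq_abs]
  rw [hsq, hsq, ← ENNReal.ofReal_one, ← ENNReal.ofReal_add zero_le_one (sq_nonneg a),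
    ← ENNReal.ofReal_add (by positivity) (sq_nonneg b), Real.enorm_eq_ofReal_abs,
    Real.enorm_eq_ofReal_abs, mul_assoc, ← ENNReal.ofReal_mul (by positivity),
    ← ENNReal.ofReal_mul' (by positivity), ← mul_assoc]
  exact ENNReal.ofReal_le_ofReal (hf a b)

theorem eLpNorm_comp_sub_comp_le {O : Type*} [MeasurableSpace O] {μ : Measure O}
    {f : ℝ → ℝ} {K : ℝ} (hf : ∀ a b, |f a - f b| ≤ K * (1 + a ^ 2 + b ^ 2) * |a - b|)
    {u v : O → ℝ} (huv : AEStronglyMeasurable (fun x => u x - v x) μ) (p : ℝ≥0∞) :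
    eLpNorm (fun x => f (u x) - f (v x)) p μ
      ≤ ENNReal.ofReal K * eLpNorm (fun x => u x - v x) p μ *
        (1 + eLpNorm u ⊤ μ ^ 2 + eLpNorm v ⊤ μ ^ 2) := by
  rw [mul_right_comm]
  refine eLpNorm_le_mul_eLpNorm_of_ae_le_mul'' p huv ?_
  filter_upwards [enorm_ae_le_eLpNormEssSup u μ, enorm_ae_le_eLpNormEssSup v μ] with x hu hv
  rw [eLpNorm_exponent_top, eLpNorm_exponent_top]
  exact (enorm_sub_le_of_abs_sub_le hf (u x) (v x)).trans (by gcongr)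

noncomputable def phiRadicand (t z : ℝ) : ℝ := z ^ 2 + (1 - z ^ 2) * exp (-2 * t)

theorem exp_neg_two_mul_le_phiRadicand {t : ℝ} (ht : 0 ≤ t) (z : ℝ) :
    exp (-2 * t) ≤ phiRadicand t z := by
  have : exp (-2 * t) ≤ 1 := exp_le_one_iff.2 (by linarith)
  unfold phiRadicand
  nlinarith [sq_nonneg z]

theorem phiRadicand_pos {t : ℝ} (ht : 0 ≤ t) (z : ℝ) : 0 < phiRadicand t z :=
  (exp_pos _).trans_le (exp_neg_two_mul_le_phiRadicand ht z)

theorem hasDerivAt_Phi {t : ℝ} (ht : 0 ≤ t) (z : ℝ) :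
    HasDerivAt (Phi t) (exp (-2 * t) / (phiRadicand t z * √(phiRadicand t z))) z := by
  have hR := phiRadicand_pos ht z
  have hR' : HasDerivAt (phiRadicand t) (2 * z * (1 - exp (-2 * t))) z := by
    refine ((hasDerivAt_pow 2 z).add (((hasDerivAt_pow 2 z).const_sub 1).mul_const
      (exp (-2 * t)))).congr_deriv ?_
    push_cast; ring
  refine ((hasDerivAt_id' z).div (hR'.sqrt hR.ne') (sqrt_pos.2 hR).ne').congr_deriv ?_
  have hsq := sq_sqrt hR.le
  field_simp
  rw [hsq]
  simp only [phiRadicand, neg_mul]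
  ring

noncomputable def psiDeriv (δt z : ℝ) : ℝ :=
  if δt = 0 then 1 - 3 * z ^ 2
  else (exp (-2 * δt) / (phiRadicand δt z * √(phiRadicand δt z)) - 1) / δt

theorem hasDerivAt_Psi {δt : ℝ} (hδt : 0 ≤ δt) (z : ℝ) :
    HasDerivAt (Psi δt) (psiDeriv δt z) z := by
  rcases hδt.eq_or_lt with rfl | hδt
  · have hPsi : Psi 0 = F := funext fun _ => if_pos rfl
    rw [hPsi, psiDeriv, if_pos rfl]
    refine ((hasDerivAt_id' z).fun_sub (hasDerivAt_pow 3 z)).congr_deriv ?_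
    push_cast; ring
  · have hPsi : Psi δt = fun y => (Phi δt y - y) / δt := funext fun _ => if_neg hδt.ne'
    rw [hPsi, psiDeriv, if_neg hδt.ne']
    exact ((hasDerivAt_Phi hδt.le z).fun_sub (hasDerivAt_id' z)).div_const δt

theorem abs_exp_div_phiRadicand_sub_one_le {t : ℝ} (ht : 0 ≤ t) (z : ℝ) :
    |exp (-2 * t) / (phiRadicand t z * √(phiRadicand t z)) - 1|
      ≤ 2 * (1 - exp (-2 * t)) * exp (3 * t) * (1 + z ^ 2) := by
  set ε := exp (-2 * t)
  set R := phiRadicand t z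
  set G := √R
  have hε1 : ε ≤ 1 := exp_le_one_iff.2 (by linarith)
  have hεR : ε ≤ R := exp_neg_two_mul_le_phiRadicand ht z
  have hR : 0 < R := phiRadicand_pos ht z
  have hG : exp (-t) ≤ G := by
    rw [← sqrt_sq (exp_pos (-t)).le, ← exp_nat_mul]
    exact sqrt_le_sqrt (by convert hεR using 2; push_cast; ring)
  have hG0 : 0 < G := (exp_pos _).trans_le hG
  have hGsq : G ^ 2 = R := sq_sqrt hR.le
  have hεR_abs : |ε - R| = (1 - ε) * z ^ 2 := by
    rw [abs_sub_comm, abs_of_nonneg (by linarith)]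
    simp only [R, phiRadicand]; ring
  have h1G_abs : |1 - G| ≤ (1 - ε) * (1 + z ^ 2) := by
    have h1R : 1 - R = (1 - ε) * (1 - z ^ 2) := by simp only [R, phiRadicand]; ring
    calc |1 - G| ≤ |1 - G| * (1 + G) := le_mul_of_one_le_right (abs_nonneg _) (by linarith)
      _ = |(1 - G) * (1 + G)| := by rw [abs_mul, abs_of_pos (by linarith : 0 < 1 + G)]
      _ = (1 - ε) * |1 - z ^ 2| := by
        rw [show (1 - G) * (1 + G) = 1 - R by rw [← hGsq]; ring, h1R, abs_mul,
          abs_of_nonneg (by linarith : 0 ≤ 1 - ε)]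
      _ ≤ (1 - ε) * (1 + z ^ 2) := by
        gcongr
        exact abs_le.2 ⟨by linarith [sq_nonneg z], by linarith [sq_nonneg z]⟩
  have hRG_inv : (R * G)⁻¹ ≤ exp (3 * t) :=
    calc (R * G)⁻¹ ≤ (ε * exp (-t))⁻¹ :=
          inv_anti₀ (by positivity) (mul_le_mul hεR hG (exp_pos _).le hR.le)
      _ = exp (3 * t) := by rw [← exp_add, ← exp_neg]; ring_nf
  have hG_inv : G⁻¹ ≤ exp (3 * t) :=
    calc G⁻¹ ≤ (exp (-t))⁻¹ := inv_anti₀ (exp_pos _) hG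
      _ ≤ exp (3 * t) := by rw [← exp_neg, neg_neg]; exact exp_le_exp.2 (by linarith)
  calc |ε / (R * G) - 1| = |(ε - R) * (R * G)⁻¹ + (1 - G) * G⁻¹| := by
        congr 1; field_simp; ring
    _ ≤ |ε - R| * (R * G)⁻¹ + |1 - G| * G⁻¹ := by
        refine (abs_add_le _ _).trans_eq ?_
        rw [abs_mul, abs_mul, abs_of_pos (inv_pos.2 (mul_pos hR hG0)), abs_of_pos (inv_pos.2 hG0)]
    _ ≤ (1 - ε) * z ^ 2 * exp (3 * t) + (1 - ε) * (1 + z ^ 2) * exp (3 * t) := by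
        rw [hεR_abs]; gcongr
    _ ≤ 2 * (1 - ε) * exp (3 * t) * (1 + z ^ 2) := by
        nlinarith [exp_pos (3 * t), mul_nonneg (sub_nonneg.2 hε1) (exp_pos (3 * t)).le]

theorem abs_psiDeriv_le {δt : ℝ} (hδt : 0 ≤ δt) (z : ℝ) :
    |psiDeriv δt z| ≤ 4 * exp (3 * δt) * (1 + z ^ 2) := by
  rcases hδt.eq_or_lt with rfl | hδt
  · rw [psiDeriv, if_pos rfl, mul_zero, exp_zero]
    exact abs_le.2 ⟨by linarith [sq_nonneg z], by linarith [sq_nonneg z]⟩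
  · have hexp : 1 - exp (-2 * δt) ≤ 2 * δt := by linarith [add_one_le_exp (-2 * δt)]
    rw [psiDeriv, if_neg hδt.ne', abs_div, abs_of_pos hδt, div_le_iff₀ hδt]
    refine (abs_exp_div_phiRadicand_sub_one_le hδt.le z).trans ?_
    have : 0 ≤ exp (3 * δt) * (1 + z ^ 2) := by positivity
    nlinarith

theorem abs_Psi_sub_Psi_le {δt : ℝ} (hδt : 0 ≤ δt) (a b : ℝ) :
    |Psi δt a - Psi δt b| ≤ 4 * exp (3 * δt) * (1 + a ^ 2 + b ^ 2) * |a - b| :=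
  abs_sub_le_of_forall_abs_deriv_le (hasDerivAt_Psi hδt) (abs_psiDeriv_le hδt) a b

theorem psi_Lq_lipschitz_sup_norm_general {O : Type*} [MeasurableSpace O] (μ : Measure O)
    (δt₀ : ℝ) :
    ∃ C : ℝ, 0 < C ∧ ∀ q : ℝ, 1 ≤ q → ∀ δt ∈ Set.Icc (0 : ℝ) δt₀, ∀ u v : O → ℝ,
      Measurable u → Measurable v →
      eLpNorm u ⊤ μ < ⊤ → eLpNorm v ⊤ μ < ⊤ →
      eLpNorm (fun x => Psi δt (u x) - Psi δt (v x)) (ENNReal.ofReal q) μ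
        ≤ ENNReal.ofReal C * eLpNorm (fun x => u x - v x) (ENNReal.ofReal q) μ *
          (1 + eLpNorm u ⊤ μ ^ 2 + eLpNorm v ⊤ μ ^ 2) := by
  refine ⟨4 * exp (3 * δt₀), by positivity, fun q _ δt hδt u v hu hv _ _ => ?_⟩
  refine eLpNorm_comp_sub_comp_le (fun a b => (abs_Psi_sub_Psi_le hδt.1 a b).trans ?_)
    (hu.sub hv).aestronglyMeasurable _
  gcongr
  exact hδt.2

/-- `L^q` local Lipschitz estimate for the modified nonlinearity via essential
supremum norms: for `δt₀ ∈ (0,1)` there is `C = C(δt₀) > 0` such that for every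
`q ∈ [1,∞)`, every `δt ∈ [0, δt₀]` and all measurable `u, v` with finite essential
supremum norms,
`‖Ψ_{δt}∘u - Ψ_{δt}∘v‖_{L^q} ≤ C ‖u - v‖_{L^q} (1 + ‖u‖_{L^∞}² + ‖v‖_{L^∞}²)`. -/
theorem psi_Lq_lipschitz_sup_norm {O : Type*} [MeasurableSpace O] (μ : Measure O)
    (δt₀ : ℝ) (h₀ : δt₀ ∈ Set.Ioo (0 : ℝ) 1) :
    ∃ C : ℝ, 0 < C ∧ ∀ q : ℝ, 1 ≤ q → ∀ δt ∈ Set.Icc (0 : ℝ) δt₀, ∀ u v : O → ℝ,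
      Measurable u → Measurable v →
      eLpNorm u ⊤ μ < ⊤ → eLpNorm v ⊤ μ < ⊤ →
      eLpNorm (fun x => Psi δt (u x) - Psi δt (v x)) (ENNReal.ofReal q) μ
        ≤ ENNReal.ofReal C * eLpNorm (fun x => u x - v x) (ENNReal.ofReal q) μ *
          (1 + eLpNorm u ⊤ μ ^ 2 + eLpNorm v ⊤ μ ^ 2) :=
  psi_Lq_lipschitz_sup_norm_general μ δt₀
end

section
/- (L^q increment bound for the splitting flow map, used in the a priori estimate of Lemma 3.1.) Let (O, μ) be a measure space with μ(O) < ∞, let q ∈ [1, ∞). There exists a constant C = C(q, μ(O)) ∈ (0,∞) such that for every δt ≥ 0 and every measurable function u : O → ℝ with finite L^{3q}(μ) norm, ‖Φ_{δt}∘u − u‖_{L^q(μ)} ≤ C·δt·(1 + ‖u‖_{L^{3q}(μ)}³). -/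
/-! With `e = exp (-2t)` and `D = e + (1 - e) z²`, one has `Φ_t(z) - z = (z / √D) (1 - √D)`.
Since `D` is a convex combination of `1` and `z²`, `|z| / √D ≤ max 1 |z|`, while
`|1 - √D| ≤ |1 - D| = (1 - e) |1 - z²|` and `1 - e ≤ 2t`; this gives the pointwise bound
`|Φ_t(z) - z| ≤ 2t (1 + |z|³)`, and Minkowski's inequality turns it into
`‖Φ_t ∘ u - u‖_q ≤ 2t (‖1‖_q + ‖u‖_{3q}³)`. -/

open MeasureTheory

theorem abs_one_sub_sqrt_le {x : ℝ} (hx : 0 ≤ x) : |1 - √x| ≤ |1 - x| := by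
  have hfactor : 1 - x = (1 - √x) * (1 + √x) := by linear_combination Real.sq_sqrt hx
  rw [hfactor, abs_mul, abs_of_pos (by positivity : 0 < 1 + √x)]
  exact le_mul_of_one_le_right (abs_nonneg _) (by simp [Real.sqrt_nonneg])

theorem abs_div_sqrt_le_max {z D : ℝ} (hD : min 1 (z ^ 2) ≤ D) : |z| / √D ≤ max 1 |z| := by
  rcases le_total |z| 1 with hz | hz
  · have : |z| ≤ √D := by
      rw [← Real.sqrt_sq_eq_abs]
      refine Real.sqrt_le_sqrt (hD.trans' (le_min ?_ le_rfl))
      nlinarith [sq_abs z, abs_nonneg z]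
    exact (div_le_one_of_le₀ this (Real.sqrt_nonneg _)).trans (le_max_left _ _)
  · have : 1 ≤ √D := Real.one_le_sqrt.mpr (by
      nlinarith [sq_abs z, min_eq_left (show (1:ℝ) ≤ z ^ 2 by nlinarith [sq_abs z])])
    exact (div_le_self (abs_nonneg z) this).trans (le_max_right _ _)

theorem max_one_abs_mul_abs_one_sub_sq_le (z : ℝ) : max 1 |z| * |1 - z ^ 2| ≤ 1 + |z| ^ 3 := by
  have ha := abs_nonneg z
  rw [← sq_abs z]
  rcases le_total |z| 1 with hz | hz
  · rw [max_eq_left hz, abs_of_nonneg (a := 1 - |z| ^ 2) (by nlinarith)]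
    nlinarith
  · rw [max_eq_right hz, abs_of_nonpos (a := 1 - |z| ^ 2) (by nlinarith)]
    nlinarith

theorem abs_Phi_sub_self_le_one_sub_exp {t : ℝ} (ht : 0 ≤ t) (z : ℝ) :
    |Phi t z - z| ≤ (1 - Real.exp (-2 * t)) * (1 + |z| ^ 3) := by
  set e := Real.exp (-2 * t)
  have he0 : 0 < e := Real.exp_pos _
  have he1 : e ≤ 1 := Real.exp_le_one_iff.mpr (by linarith)
  set D := z ^ 2 + (1 - z ^ 2) * e with hD
  have hD_ge : min 1 (z ^ 2) ≤ D := by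
    rcases le_total (z ^ 2) 1 with hz | hz
    · exact (min_le_right _ _).trans (by nlinarith)
    · exact (min_le_left _ _).trans (by nlinarith)
  have hDpos : 0 < D := by nlinarith [sq_nonneg z]
  have hsqrt : 0 < √D := Real.sqrt_pos.mpr hDpos
  have hsub : Phi t z - z = z / √D * (1 - √D) := by
    rw [Phi, ← hD]; field_simp
  calc |Phi t z - z| = |z| / √D * |1 - √D| := by
        rw [hsub, abs_mul, abs_div, abs_of_pos hsqrt]
    _ ≤ max 1 |z| * |1 - D| :=
        mul_le_mul (abs_div_sqrt_le_max hD_ge) (abs_one_sub_sqrt_le hDpos.le)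
          (abs_nonneg _) (by positivity)
    _ = (1 - e) * (max 1 |z| * |1 - z ^ 2|) := by
        rw [show 1 - D = (1 - z ^ 2) * (1 - e) by ring, abs_mul,
          abs_of_nonneg (sub_nonneg.mpr he1)]
        ring
    _ ≤ (1 - e) * (1 + |z| ^ 3) :=
        mul_le_mul_of_nonneg_left (max_one_abs_mul_abs_one_sub_sq_le z) (sub_nonneg.mpr he1)

theorem abs_Phi_sub_self_le {t : ℝ} (ht : 0 ≤ t) (z : ℝ) :
    |Phi t z - z| ≤ 2 * t * (1 + |z| ^ 3) := by
  refine (abs_Phi_sub_self_le_one_sub_exp ht z).trans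
    (mul_le_mul_of_nonneg_right ?_ (by positivity))
  linarith [Real.add_one_le_exp (-2 * t)]

section LpBounds

variable {α : Type*} [MeasurableSpace α] {μ : Measure α} {p : ENNReal}

theorem eLpNorm_abs_pow (u : α → ℝ) {n : ℕ} (hn : n ≠ 0) :
    eLpNorm (fun x => |u x| ^ n) p μ = eLpNorm u (p * n) μ ^ n := by
  have h := eLpNorm_norm_rpow u (p := p) (μ := μ) (q := n) (by positivity)
  simp only [Real.norm_eq_abs, Real.rpow_natCast, ENNReal.ofReal_natCast,
    ENNReal.rpow_natCast] at h
  exact h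

theorem eLpNorm_one_add_abs_pow_le (hp : 1 ≤ p) {u : α → ℝ} (hu : AEStronglyMeasurable u μ)
    {n : ℕ} (hn : n ≠ 0) :
    eLpNorm (fun x => 1 + |u x| ^ n) p μ
      ≤ (1 + eLpNorm (fun _ => (1 : ℝ)) p μ) * (1 + eLpNorm u (p * n) μ ^ n) :=
  calc eLpNorm (fun x => 1 + |u x| ^ n) p μ
      ≤ eLpNorm (fun _ => (1 : ℝ)) p μ + eLpNorm (fun x => |u x| ^ n) p μ :=
        eLpNorm_add_le aestronglyMeasurable_const (hu.norm.pow n) hp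
    _ = eLpNorm (fun _ => (1 : ℝ)) p μ + eLpNorm u (p * n) μ ^ n := by
        rw [eLpNorm_abs_pow u hn]
    _ ≤ _ := by
        rw [mul_add, mul_one]
        gcongr
        · exact le_add_self
        · exact le_mul_of_one_le_left' le_self_add

end LpBounds

/-- `L^q` increment bound for the splitting flow map (used in the a priori estimate of
Lemma 3.1): on a finite measure space, for `q ∈ [1,∞)` there is `C = C(q, μ(O)) > 0`
such that for every `δt ≥ 0` and every measurable `u` with finite `L^{3q}` norm,
`‖Φ_{δt}∘u - u‖_{L^q} ≤ C δt (1 + ‖u‖_{L^{3q}}³)`. -/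
theorem phi_Lq_increment_bound {O : Type*} [MeasurableSpace O] (μ : Measure O)
    [IsFiniteMeasure μ] (q : ℝ) (hq : 1 ≤ q) :
    ∃ C : ℝ, 0 < C ∧ ∀ δt : ℝ, 0 ≤ δt → ∀ u : O → ℝ,
      Measurable u →
      eLpNorm u (ENNReal.ofReal (3 * q)) μ < ⊤ →
      eLpNorm (fun x => Phi δt (u x) - u x) (ENNReal.ofReal q) μ
        ≤ ENNReal.ofReal (C * δt) *
            (1 + eLpNorm u (ENNReal.ofReal (3 * q)) μ ^ 3) := by
  set A := eLpNorm (fun _ : O => (1 : ℝ)) (ENNReal.ofReal q) μ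
  have hA : 1 + A = ENNReal.ofReal (1 + A.toReal) := by
    rw [ENNReal.ofReal_add zero_le_one ENNReal.toReal_nonneg, ENNReal.ofReal_one,
      ENNReal.ofReal_toReal (memLp_const (1 : ℝ)).eLpNorm_ne_top]
  have h3q : ENNReal.ofReal (3 * q) = ENNReal.ofReal q * (3 : ℕ) := by
    rw [mul_comm, ENNReal.ofReal_mul (by linarith)]
    norm_num
  refine ⟨2 * (1 + A.toReal), by positivity, fun δt hδt u hu _ => ?_⟩
  calc eLpNorm (fun x => Phi δt (u x) - u x) (ENNReal.ofReal q) μ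
      ≤ ENNReal.ofReal (2 * δt) * eLpNorm (fun x => 1 + |u x| ^ 3) (ENNReal.ofReal q) μ :=
        eLpNorm_le_mul_eLpNorm_of_ae_le_mul (ae_of_all _ fun x => by
          rw [Real.norm_eq_abs, Real.norm_of_nonneg (by positivity)]
          exact abs_Phi_sub_self_le hδt (u x)) _
    _ ≤ ENNReal.ofReal (2 * δt) *
          ((1 + A) * (1 + eLpNorm u (ENNReal.ofReal (3 * q)) μ ^ 3)) := by
        rw [h3q]
        gcongr
        exact eLpNorm_one_add_abs_pow_le (ENNReal.one_le_ofReal.mpr hq)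
          hu.aestronglyMeasurable three_ne_zero
    _ = _ := by
        rw [hA, ← mul_assoc, ← ENNReal.ofReal_mul (by positivity)]
        ring_nf
end
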